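/- arXiv:1905.10996 — 2 statements merged into one kernel-verified Lean document; each statement's English description precedes it below -/
import Mathlib

section
/- Under the hypotheses of the previous statement, for all |h| < ε the sublevel set filtrations of K induced by f(θ₀, ·) and by f(θ₀+h, ·) coincide as sequences of subcomplexes: K^{f(θ₀,·), i} = K^{f(θ₀+h,·), i} for all 0 ≤ i ≤ n. -/
open Finset

/-- A (finite, abstract) simplicial complex over vertex type `V`:
a set of nonempty finite subsets of `V` closed under taking nonempty subsets. -/
def IsSimplicialComplex {V : Type*} (K : Set (Finset V)) : Prop :=
  ∅ ∉ K ∧ ∀ σ ∈ K, ∀ τ ⊆ σ, τ.Nonempty → τ ∈ K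

/-- The rank of a vertex `v` under `g`: the number of vertices `u` with `g u ≤ g v`.
For injective `g`, the sorted filter values satisfy `a i = g v` iff `vrank g v = i`. -/
noncomputable def vrank {n : ℕ} (g : Fin n → ℝ) (v : Fin n) : ℕ :=
  (Finset.univ.filter fun u => g u ≤ g v).card

/-- The `i`-th complex `K^{g,i}` of the sublevel set filtration induced by an injective vertex
filter `g`: the simplices all of whose vertices have one of the `i` smallest filter values,
i.e. `{σ ∈ K : max_{v ∈ σ} g v ≤ a i}` where `a 1 < ... < a n` are the sorted values of `g`. -/
noncomputable def sublevelCplx {n : ℕ} (K : Set (Finset (Fin n))) (g : Fin n → ℝ) (i : ℕ) :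
    Set (Finset (Fin n)) :=
  {σ ∈ K | ∀ v ∈ σ, vrank g v ≤ i}

/-- If `f` is continuous in `θ` for each vertex and the vertex filter values at
`θ₀` are pairwise distinct, then for all sufficiently small `|h|` the sublevel set filtrations of
`K` induced by `f (θ₀ + h)` and by `f θ₀` coincide as sequences of subcomplexes:
`K^{f(θ₀+h,·), i} = K^{f(θ₀,·), i}` for all `0 ≤ i ≤ n`. -/
theorem sublevel_filtration_locally_constant
    (n : ℕ) (K : Set (Finset (Fin n))) (hK : IsSimplicialComplex K)
    (f : ℝ → Fin n → ℝ) (θ₀ : ℝ)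
    (hc : ∀ v : Fin n, Continuous fun θ => f θ v)
    (hdist : Function.Injective (f θ₀)) :
    ∃ ε > (0 : ℝ), ∀ h : ℝ, |h| < ε → ∀ i : ℕ, i ≤ n →
      sublevelCplx K (f (θ₀ + h)) i = sublevelCplx K (f θ₀) i := by
  have hev : ∀ᶠ h : ℝ in nhds 0, ∀ u v : Fin n,
      f θ₀ u < f θ₀ v → f (θ₀ + h) u < f (θ₀ + h) v := by
    rw [Filter.eventually_all]
    intro u
    rw [Filter.eventually_all]
    intro v
    by_cases hlt : f θ₀ u < f θ₀ v
    · have hopen : IsOpen {h : ℝ | f (θ₀ + h) u < f (θ₀ + h) v} :=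
        isOpen_lt ((hc u).comp (continuous_const.add continuous_id))
          ((hc v).comp (continuous_const.add continuous_id))
      have hmem : (0 : ℝ) ∈ {h : ℝ | f (θ₀ + h) u < f (θ₀ + h) v} := by
        simpa using hlt
      filter_upwards [hopen.mem_nhds hmem] with h hh _
      exact hh
    · exact Filter.Eventually.of_forall fun h hh => absurd hh hlt
  rw [Metric.eventually_nhds_iff] at hev
  obtain ⟨ε, hε, hev⟩ := hev
  refine ⟨ε, hε, fun h hh i _ => ?_⟩
  have hord := hev (y := h) (by simpa [Real.dist_eq] using hh)
  have hrank : ∀ v, vrank (f (θ₀ + h)) v = vrank (f θ₀) v := by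
    intro v
    unfold vrank
    congr 1
    ext u
    simp only [mem_filter, mem_univ, true_and]
    rcases eq_or_ne u v with rfl | huv
    · simp
    · rcases (hdist.ne huv).lt_or_gt with h1 | h1
      · constructor
        · intro; exact h1.le
        · intro; exact (hord u v h1).le
      · constructor
        · intro h2; exact absurd (hord v u h1) (not_lt.mpr h2)
        · intro h2; exact absurd h1 (not_lt.mpr h2)
  unfold sublevelCplx
  ext σ
  simp [hrank]
end

section
/- Fundamental Lemma of Persistent Homology (counting form): for a filtration ∅ = K⁰ ⊆ ... ⊆ K^m = K and indices 1 ≤ p ≤ q ≤ m, the persistent Betti number satisfies β_k^{p,q} = Σ_{i ≤ p} Σ_{j > q} μ_k^{i,j}, where μ_k^{i,j} = (β_k^{i,j−1} − β_k^{i,j}) − (β_k^{i−1,j−1} − β_k^{i−1,j}) for j ≤ m and μ_k^{i,∞} = β_k^{i,m} − β_k^{i−1,m}. -/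
open Finset

/-- The simplicial boundary operator over `ZMod 2` on the free module spanned by all
finite subsets of `V`: a simplex of dimension `≥ 1` is sent to the formal sum of its
codimension-one faces, a vertex is sent to `0`. -/
noncomputable def bdry (V : Type*) [Fintype V] [DecidableEq V] :
    (Finset V → ZMod 2) →ₗ[ZMod 2] (Finset V → ZMod 2) :=
  ∑ σ : Finset V, (LinearMap.proj σ).smulRight
      (if 2 ≤ σ.card then ∑ v ∈ σ, Pi.single (σ.erase v) (1 : ZMod 2) else 0)

open Classical in
/-- The space of `k`-chains over `ZMod 2` of a set `S` of simplices: chains supported on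
the `k`-dimensional simplices (cardinality `k+1`) belonging to `S`. -/
noncomputable def chains {V : Type*} [Fintype V] [DecidableEq V]
    (S : Set (Finset V)) (k : ℕ) : Submodule (ZMod 2) (Finset V → ZMod 2) :=
  Submodule.pi Set.univ
    (fun σ => if σ ∈ S ∧ σ.card = k + 1 then (⊤ : Submodule (ZMod 2) (ZMod 2)) else ⊥)

/-- The `k`-cycles of `S`: kernel of the `k`-th boundary operator of `S`. -/
noncomputable def cyclesSub {V : Type*} [Fintype V] [DecidableEq V]
    (S : Set (Finset V)) (k : ℕ) : Submodule (ZMod 2) (Finset V → ZMod 2) :=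
  chains S k ⊓ LinearMap.ker (bdry V)

/-- The `k`-boundaries of `S`: image of the `(k+1)`-st boundary operator of `S`. -/
noncomputable def boundariesSub {V : Type*} [Fintype V] [DecidableEq V]
    (S : Set (Finset V)) (k : ℕ) : Submodule (ZMod 2) (Finset V → ZMod 2) :=
  Submodule.map (bdry V) (chains S (k + 1))

/-- The persistent Betti number `β_k^{i,j}` of a pair of complexes `Ki ⊆ Kj`:
the rank of `H_k^{i,j} = ker ∂_k^i / (im ∂_{k+1}^j ∩ ker ∂_k^i)`. -/
noncomputable def pBetti {V : Type*} [Fintype V] [DecidableEq V]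
    (Ki Kj : Set (Finset V)) (k : ℕ) : ℕ :=
  Module.finrank (ZMod 2)
    (↥(cyclesSub Ki k) ⧸ Submodule.comap (cyclesSub Ki k).subtype (boundariesSub Kj k))


/-- The persistent Betti number `β_k^{i,j}` of a filtration `Kc`, as an integer. -/
noncomputable def pB {V : Type*} [Fintype V] [DecidableEq V]
    (Kc : ℕ → Set (Finset V)) (k i j : ℕ) : ℤ :=
  pBetti (Kc i) (Kc j) k

/-- The multiplicity `μ_k^{i,j} = (β_k^{i,j−1} − β_k^{i,j}) − (β_k^{i−1,j−1} − β_k^{i−1,j})`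
of the barcode point `(a_i, a_j)`. -/
noncomputable def mult {V : Type*} [Fintype V] [DecidableEq V]
    (Kc : ℕ → Set (Finset V)) (k i j : ℕ) : ℤ :=
  (pB Kc k i (j - 1) - pB Kc k i j) - (pB Kc k (i - 1) (j - 1) - pB Kc k (i - 1) j)

/-- The multiplicity `μ_k^{i,∞} = β_k^{i,m} − β_k^{i−1,m}` of the essential barcode point
with birth index `i`. -/
noncomputable def multInf {V : Type*} [Fintype V] [DecidableEq V]
    (Kc : ℕ → Set (Finset V)) (k m i : ℕ) : ℤ :=
  pB Kc k i m - pB Kc k (i - 1) m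

/-- Telescoping sum over an `Icc` interval. -/
lemma tele (f : ℕ → ℤ) : ∀ m q : ℕ, q ≤ m →
    ∑ j ∈ Finset.Icc (q + 1) m, (f (j - 1) - f j) = f q - f m := by
  intro m
  induction m with
  | zero => intro q hq; simp [Nat.le_zero.mp hq]
  | succ n ih =>
    intro q hq
    rcases Nat.eq_or_lt_of_le hq with h | h
    · simp [h]
    · have hqn : q ≤ n := Nat.lt_succ_iff.mp h
      rw [Finset.sum_Icc_succ_top (Nat.succ_le_succ hqn), ih q hqn]
      simp

/-- `β_k^{0,q} = 0` since `K⁰ = ∅`. -/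
lemma pB_zero {V : Type*} [Fintype V] [DecidableEq V]
    (Kc : ℕ → Set (Finset V)) (h0 : Kc 0 = ∅) (k q : ℕ) : pB Kc k 0 q = 0 := by
  have hc : cyclesSub (Kc 0) k = ⊥ := by
    apply le_antisymm _ bot_le
    refine le_trans inf_le_left ?_
    rw [h0]
    intro x hx
    rw [Submodule.mem_bot]
    funext σ
    have := hx σ (Set.mem_univ σ)
    simpa using this
  haveI : Subsingleton ↥(cyclesSub (Kc 0) k) := by rw [hc]; infer_instance
  haveI : Subsingleton
      (↥(cyclesSub (Kc 0) k) ⧸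
        Submodule.comap (cyclesSub (Kc 0) k).subtype (boundariesSub (Kc q) k)) :=
    (Submodule.Quotient.mk_surjective _).subsingleton
  simp [pB, pBetti, Module.finrank_zero_of_subsingleton]

open Finset in
/-- Fundamental Lemma of Persistent Homology (counting form): for a
filtration `∅ = K⁰ ⊆ ... ⊆ K^m` and indices `1 ≤ p ≤ q ≤ m`,
`β_k^{p,q} = Σ_{i ≤ p} Σ_{j > q} μ_k^{i,j}`, where the inner sum runs over `q < j ≤ m`
together with `j = ∞`. -/
theorem fundamental_lemma_of_persistent_homology
    (V : Type*) [Fintype V] [DecidableEq V]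
    (m : ℕ) (Kc : ℕ → Set (Finset V)) (hmono : Monotone Kc)
    (h0 : Kc 0 = ∅) (hcplx : ∀ i ≤ m, i ≠ 0 → IsSimplicialComplex (Kc i)) (k : ℕ) :
    ∀ p q : ℕ, 1 ≤ p → p ≤ q → q ≤ m →
      pB Kc k p q =
        ∑ i ∈ Finset.Icc 1 p,
          ((∑ j ∈ Finset.Icc (q + 1) m, mult Kc k i j) + multInf Kc k m i) := by
  intro p q hp hpq hqm
  have hsummand : ∀ i : ℕ,
      (∑ j ∈ Finset.Icc (q + 1) m, mult Kc k i j) + multInf Kc k m i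
        = pB Kc k i q - pB Kc k (i - 1) q := by
    intro i
    have h1 : ∑ j ∈ Finset.Icc (q + 1) m, mult Kc k i j
        = (pB Kc k i q - pB Kc k i m) - (pB Kc k (i - 1) q - pB Kc k (i - 1) m) := by
      unfold mult
      rw [Finset.sum_sub_distrib, tele (pB Kc k i) m q hqm,
        tele (pB Kc k (i - 1)) m q hqm]
    rw [h1]; unfold multInf; ring
  calc pB Kc k p q = pB Kc k p q - pB Kc k 0 q := by rw [pB_zero Kc h0]; ring
    _ = -(pB Kc k 0 q - pB Kc k p q) := by ring
    _ = -∑ j ∈ Finset.Icc (0 + 1) p, (pB Kc k (j - 1) q - pB Kc k j q) := by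
        rw [tele (fun i => pB Kc k i q) p 0 (Nat.zero_le p)]
    _ = ∑ i ∈ Finset.Icc 1 p, (pB Kc k i q - pB Kc k (i - 1) q) := by
        rw [← Finset.sum_neg_distrib]; simp
    _ = _ := by
        refine Finset.sum_congr rfl fun i _ => ?_
        rw [hsummand]
end
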